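/- Isotopy lemma for fillings (coordinate version of Lemma 5.4): let D = {(s,t) ∈ ℝ² : s²+t² ≤ 1}, let ε ∈ (0,1), and let χ = (χ¹, χ², χ³) : ℝ × ℝ² → ℝ × ℝ² be a C^∞ map such that: χ¹(θ+2π,s,t) = χ¹(θ,s,t) + 2π and χ², χ³ are 2π-periodic in θ (so χ is a lift of a map of S¹ × ℝ²); χ restricts to a bijection of ℝ × D with invertible total derivative at every point of ℝ × D; χ(θ,s,t) = (θ,s,t) whenever s²+t² ≥ 1−ε; χ³(θ,s,t) = t for all (θ,s,t); χ(0,s,t) = (0,s,t) for all (s,t) ∈ D; and ∂χ¹/∂θ > 0 everywhere on ℝ × D. Then χ is smoothly isotopic to the identity relative to the boundary region: there is a C^∞ map X : ℝ × ℝ × ℝ² → ℝ × ℝ² with X(0,·) = χ and X(1,·) = id on ℝ × D, such that for every σ ∈ [0,1] the map X(σ,·) satisfies the same equivariance (first component shifts by 2π under θ ↦ θ+2π, the other components are 2π-periodic in θ), restricts to a bijection of ℝ × D with invertible total derivative at every point of ℝ × D, and equals the identity on ℝ × {(s,t) : s²+t² ≥ 1−ε}. -/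

import Mathlib

/-- The closed unit disc `D = {(s,t) : s² + t² ≤ 1} ⊆ ℝ²`. -/
def paramDisc : Set (ℝ × ℝ) := {p : ℝ × ℝ | p.1 ^ 2 + p.2 ^ 2 ≤ 1}

/-- The solid cylinder `ℝ × D ⊆ ℝ × ℝ²`, the universal cover of the solid torus
`S¹ × D`. -/
def solidCyl : Set (ℝ × ℝ × ℝ) := {p : ℝ × ℝ × ℝ | p.2 ∈ paramDisc}

/-- A map `ℝ × ℝ² → ℝ × ℝ²` is a lift of a map of `S¹ × ℝ²` (with `S¹ = ℝ/2πℤ`):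
its first component shifts by `2π` under `θ ↦ θ + 2π`, and the remaining components
are `2π`-periodic in `θ`. -/
def IsTorusLift (g : ℝ × ℝ × ℝ → ℝ × ℝ × ℝ) : Prop :=
  ∀ p : ℝ × ℝ × ℝ,
    (g (p.1 + 2 * Real.pi, p.2)).1 = (g p).1 + 2 * Real.pi ∧
    (g (p.1 + 2 * Real.pi, p.2)).2 = (g p).2

open Function Set Real

theorem mem_solidCyl {p : ℝ × ℝ × ℝ} : p ∈ solidCyl ↔ p.2.1 ^ 2 + p.2.2 ^ 2 ≤ 1 := Iff.rfl

section Helpers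

variable {E : Type*} [NormedAddCommGroup E] [NormedSpace ℝ E] [CompleteSpace E]
  [FiniteDimensional ℝ E]

/-- A smooth bijection of a finite-dimensional space with everywhere invertible
derivative has a smooth global inverse. -/
theorem contDiff_invFun_aux {f g : E → E} (hf : ContDiff ℝ (⊤ : ℕ∞) f)
    (hfg : ∀ y, f (g y) = y) (hgf : ∀ x, g (f x) = x)
    (hd : ∀ x, Function.Bijective (fderiv ℝ f x)) :
    ContDiff ℝ (⊤ : ℕ∞) g := by
  rw [contDiff_iff_contDiffAt]
  intro y
  set x := g y with hx
  have hfx : f x = y := hfg y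
  set L := fderiv ℝ f x with hL
  let e₀ : E ≃ₗ[ℝ] E := LinearEquiv.ofBijective (L : E →ₗ[ℝ] E) (hd x)
  let e : E ≃L[ℝ] E := e₀.toContinuousLinearEquiv
  have hecoe : (e : E →L[ℝ] E) = L := by ext v; rfl
  have hfe : HasFDerivAt f (e : E →L[ℝ] E) x := by
    rw [hecoe]; exact (hf.differentiable (by simp) x).hasFDerivAt
  have hca : ContDiffAt ℝ (⊤ : ℕ∞) f x := hf.contDiffAt
  have hstrict : HasStrictFDerivAt f (e : E →L[ℝ] E) x :=
    hca.hasStrictFDerivAt' hfe (by simp)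
  have hinv : ContDiffAt ℝ (⊤ : ℕ∞) (hca.localInverse hfe (by simp)) (f x) :=
    hca.to_localInverse hfe (by simp)
  have heq : ∀ᶠ y' in nhds (f x), g y' = (hca.localInverse hfe (by simp)) y' :=
    hstrict.localInverse_unique (Filter.Eventually.of_forall fun x' => hgf x')
  rw [hfx] at hinv heq
  exact hinv.congr_of_eventuallyEq heq

/-- A continuous map `ℝ → ℝ` commuting with translation by `2π` is surjective. -/
theorem surjective_of_equivariant_aux {f : ℝ → ℝ} (hc : Continuous f)
    (h : ∀ x, f (x + 2 * π) = f x + 2 * π) : Function.Surjective f := by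
  have key : ∀ n : ℤ, f (2 * π * n) = f 0 + 2 * π * n := by
    intro n
    induction n using Int.induction_on with
    | zero => simp
    | succ k ih =>
      have e : 2 * π * ((k : ℤ) + 1 : ℤ) = (2 * π * (k : ℤ) : ℝ) + 2 * π := by push_cast; ring
      rw [e, h, ih]; push_cast; ring
    | pred k ih =>
      have e : (2 * π * (-(k : ℤ) - 1 : ℤ) : ℝ) + 2 * π = 2 * π * (-(k:ℤ) : ℤ) := by
        push_cast; ring
      have h1 := h (2 * π * (-(k : ℤ) - 1 : ℤ) : ℝ)
      rw [e, ih] at h1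
      have h2 : f (2 * π * (-(k : ℤ) - 1 : ℤ) : ℝ)
          = f 0 + 2 * π * ((-(k:ℤ) : ℤ) : ℝ) - 2 * π := by linarith
      rw [h2]; push_cast; ring
  intro y
  have hπ : 0 < 2 * π := by positivity
  obtain ⟨m, hm⟩ := exists_int_gt ((y - f 0) / (2 * π))
  obtain ⟨n, hn⟩ := exists_int_lt ((y - f 0) / (2 * π))
  have h1 : f 0 + 2 * π * n ≤ y := by
    have := (lt_div_iff₀ hπ).mp hn; nlinarith [this]
  have h2 : y ≤ f 0 + 2 * π * m := by
    have := (div_lt_iff₀ hπ).mp hm; nlinarith [this]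
  have hab : (2 * π * n : ℝ) ≤ 2 * π * m := by nlinarith
  obtain ⟨x, _, hx⟩ := intermediate_value_Icc hab hc.continuousOn
    (show y ∈ Icc (f (2 * π * n)) (f (2 * π * m)) by rw [key n, key m]; exact ⟨h1, h2⟩)
  exact ⟨x, hx⟩

/-- Derivative of a map along the first coordinate line. -/
theorem hasDerivAt_line1 {χ : ℝ × ℝ × ℝ → ℝ × ℝ × ℝ} (hχ : Differentiable ℝ χ)
    (y : ℝ × ℝ) (θ : ℝ) :
    HasDerivAt (fun θ' => χ (θ', y)) (fderiv ℝ χ (θ, y) (1, 0, 0)) θ := by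
  have h1 : HasDerivAt (fun θ' : ℝ => θ') 1 θ := hasDerivAt_id θ
  have h2 : HasDerivAt (fun _ : ℝ => y) 0 θ := hasDerivAt_const θ y
  exact (hχ (θ, y)).hasFDerivAt.comp_hasDerivAt θ (h1.prodMk h2)

/-- Derivative of a map along the second coordinate line. -/
theorem hasDerivAt_line2 {χ : ℝ × ℝ × ℝ → ℝ × ℝ × ℝ} (hχ : Differentiable ℝ χ)
    (θ t : ℝ) (s : ℝ) :
    HasDerivAt (fun s' => χ (θ, s', t)) (fderiv ℝ χ (θ, s, t) (0, 1, 0)) s := by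
  have h1 : HasDerivAt (fun _ : ℝ => θ) 0 s := hasDerivAt_const s θ
  have h2 : HasDerivAt (fun s' : ℝ => s') 1 s := hasDerivAt_id s
  have h3 : HasDerivAt (fun _ : ℝ => t) 0 s := hasDerivAt_const s t
  exact (hχ (θ, s, t)).hasFDerivAt.comp_hasDerivAt s (h1.prodMk (h2.prodMk h3))

theorem HasDerivAt.fst' {F G : Type*} [NormedAddCommGroup F] [NormedSpace ℝ F]
    [NormedAddCommGroup G] [NormedSpace ℝ G]
    {f : ℝ → F × G} {d : F × G} {x : ℝ} (h : HasDerivAt f d x) :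
    HasDerivAt (fun x => (f x).1) d.1 x := by
  simpa [Function.comp_def] using (ContinuousLinearMap.fst ℝ F G).hasFDerivAt.comp_hasDerivAt x h

theorem HasDerivAt.snd' {F G : Type*} [NormedAddCommGroup F] [NormedSpace ℝ F]
    [NormedAddCommGroup G] [NormedSpace ℝ G]
    {f : ℝ → F × G} {d : F × G} {x : ℝ} (h : HasDerivAt f d x) :
    HasDerivAt (fun x => (f x).2) d.2 x := by
  simpa [Function.comp_def] using (ContinuousLinearMap.snd ℝ F G).hasFDerivAt.comp_hasDerivAt x h

end Helpers


theorem hasDerivAt_line1' {F : Type*} [NormedAddCommGroup F] [NormedSpace ℝ F]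
    {χ : ℝ × ℝ × ℝ → F} (hχ : Differentiable ℝ χ) (y : ℝ × ℝ) (θ : ℝ) :
    HasDerivAt (fun θ' => χ (θ', y)) (fderiv ℝ χ (θ, y) (1, 0, 0)) θ := by
  have h1 : HasDerivAt (fun θ' : ℝ => θ') 1 θ := hasDerivAt_id θ
  have h2 : HasDerivAt (fun _ : ℝ => y) 0 θ := hasDerivAt_const θ y
  exact (hχ (θ, y)).hasFDerivAt.comp_hasDerivAt θ (h1.prodMk h2)

theorem hasDerivAt_line2' {F : Type*} [NormedAddCommGroup F] [NormedSpace ℝ F]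
    {χ : ℝ × ℝ × ℝ → F} (hχ : Differentiable ℝ χ) (θ t : ℝ) (s : ℝ) :
    HasDerivAt (fun s' => χ (θ, s', t)) (fderiv ℝ χ (θ, s, t) (0, 1, 0)) s := by
  have h1 : HasDerivAt (fun _ : ℝ => θ) 0 s := hasDerivAt_const s θ
  have h2 : HasDerivAt (fun s' : ℝ => s') 1 s := hasDerivAt_id s
  have h3 : HasDerivAt (fun _ : ℝ => t) 0 s := hasDerivAt_const s t
  exact (hχ (θ, s, t)).hasFDerivAt.comp_hasDerivAt s (h1.prodMk (h2.prodMk h3))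

variable {ε : ℝ} {χ : ℝ × ℝ × ℝ → ℝ × ℝ × ℝ}

/-- The boundary region is open and `χ` is eventually the identity near points of it. -/
theorem chi_eventually_id (hε0 : 0 < ε)
    (hid : ∀ p : ℝ × ℝ × ℝ, 1 - ε ≤ p.2.1 ^ 2 + p.2.2 ^ 2 → χ p = p)
    {p : ℝ × ℝ × ℝ} (hp : 1 - ε < p.2.1 ^ 2 + p.2.2 ^ 2) :
    χ =ᶠ[nhds p] id := by
  have hU : IsOpen {q : ℝ × ℝ × ℝ | 1 - ε < q.2.1 ^ 2 + q.2.2 ^ 2} := by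
    have hcont : Continuous fun q : ℝ × ℝ × ℝ => q.2.1 ^ 2 + q.2.2 ^ 2 := by
      apply Continuous.add
      · exact (continuous_fst.comp continuous_snd).pow 2
      · exact (continuous_snd.comp continuous_snd).pow 2
    exact isOpen_lt continuous_const hcont
  filter_upwards [hU.mem_nhds hp] with q hq
  exact hid q hq.le

theorem bpos (hε0 : 0 < ε) (hdiff : Differentiable ℝ χ)
    (hid : ∀ p : ℝ × ℝ × ℝ, 1 - ε ≤ p.2.1 ^ 2 + p.2.2 ^ 2 → χ p = p)
    (hmono : ∀ p ∈ solidCyl, 0 < (fderiv ℝ χ p ((1 : ℝ), (0 : ℝ), (0 : ℝ))).1) :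
    ∀ p : ℝ × ℝ × ℝ, 0 < (fderiv ℝ χ p ((1 : ℝ), (0 : ℝ), (0 : ℝ))).1 := by
  intro p
  by_cases hp : p.2.1 ^ 2 + p.2.2 ^ 2 ≤ 1
  · exact hmono p (mem_solidCyl.mpr hp)
  · have hev : χ =ᶠ[nhds p] id := chi_eventually_id hε0 hid (by linarith [not_le.mp hp])
    rw [hev.fderiv_eq, fderiv_id]
    norm_num

/-! ### The maps -/

noncomputable def Bmap (χ : ℝ × ℝ × ℝ → ℝ × ℝ × ℝ) : ℝ × ℝ × ℝ → ℝ × ℝ × ℝ :=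
  fun p => ((χ p).1, p.2)

noncomputable def BmapInv (χ : ℝ × ℝ × ℝ → ℝ × ℝ × ℝ) : ℝ × ℝ × ℝ → ℝ × ℝ × ℝ :=
  Function.invFun (Bmap χ)

noncomputable def gmap (χ : ℝ × ℝ × ℝ → ℝ × ℝ × ℝ) : ℝ × ℝ × ℝ → ℝ :=
  fun q => (χ (BmapInv χ q)).2.1

noncomputable def Amap (χ : ℝ × ℝ × ℝ → ℝ × ℝ × ℝ) (σ : ℝ) : ℝ × ℝ × ℝ → ℝ × ℝ × ℝ :=
  fun q => (q.1, (1 - σ) * gmap χ q + σ * q.2.1, q.2.2)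

noncomputable def Bsig (χ : ℝ × ℝ × ℝ → ℝ × ℝ × ℝ) (σ : ℝ) : ℝ × ℝ × ℝ → ℝ × ℝ × ℝ :=
  fun p => ((1 - σ) * (χ p).1 + σ * p.1, p.2)

noncomputable def Xmap (χ : ℝ × ℝ × ℝ → ℝ × ℝ × ℝ) : ℝ × (ℝ × ℝ × ℝ) → ℝ × ℝ × ℝ :=
  fun z => Amap χ z.1 (Bsig χ z.1 z.2)

/-! ### Fiberwise analysis of `Bsig` -/

section BsigFiber

variable (hdiff : Differentiable ℝ χ) {σ : ℝ} (hσ : σ ∈ Icc (0:ℝ) 1)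
  (hbpos : ∀ p : ℝ × ℝ × ℝ, 0 < (fderiv ℝ χ p ((1 : ℝ), (0 : ℝ), (0 : ℝ))).1)

include hdiff hσ hbpos

theorem bsig_fiber_hasDerivAt (y : ℝ × ℝ) (θ : ℝ) :
    HasDerivAt (fun θ' => (1 - σ) * (χ (θ', y)).1 + σ * θ')
      ((1 - σ) * (fderiv ℝ χ (θ, y) (1, 0, 0)).1 + σ) θ := by
  have h1 : HasDerivAt (fun θ' => (χ (θ', y)).1) (fderiv ℝ χ (θ, y) (1, 0, 0)).1 θ :=
    (hasDerivAt_line1' hdiff y θ).fst'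
  have h2 := (h1.const_mul (1 - σ)).add ((hasDerivAt_id θ).const_mul σ)
  simpa [Pi.add_def] using h2

theorem bsig_coeff_pos : ∀ p : ℝ × ℝ × ℝ,
    0 < (1 - σ) * (fderiv ℝ χ p (1, 0, 0)).1 + σ := by
  intro p
  rcases eq_or_lt_of_le hσ.1 with h | h
  · have := hbpos p; rw [← h]; simpa using this
  · have h1 : (0:ℝ) ≤ (1 - σ) * (fderiv ℝ χ p (1, 0, 0)).1 :=
      mul_nonneg (by linarith [hσ.2]) (hbpos p).le
    linarith

theorem bsig_fiber_strictMono (y : ℝ × ℝ) :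
    StrictMono (fun θ => (1 - σ) * (χ (θ, y)).1 + σ * θ) := by
  apply strictMono_of_deriv_pos
  intro θ
  rw [(bsig_fiber_hasDerivAt hdiff hσ hbpos y θ).deriv]
  exact bsig_coeff_pos hdiff hσ hbpos (θ, y)

theorem bsig_fiber_surjective
    (hlift : IsTorusLift χ) (y : ℝ × ℝ) :
    Function.Surjective (fun θ => (1 - σ) * (χ (θ, y)).1 + σ * θ) := by
  apply surjective_of_equivariant_aux
  · have : Continuous fun θ : ℝ => (χ (θ, y)).1 :=
      continuous_fst.comp (hdiff.continuous.comp (continuous_id.prodMk continuous_const))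
    exact (continuous_const.mul this).add (continuous_const.mul continuous_id)
  · intro θ
    have := (hlift (θ, y)).1
    simp only at this
    rw [this]; ring

theorem bsig_injective : Function.Injective (Bsig χ σ) := by
  rintro ⟨θp, yp⟩ ⟨θq, yq⟩ h
  simp only [Bsig, Prod.mk.injEq] at h
  obtain ⟨h1, h2⟩ := h
  subst h2
  have := (bsig_fiber_strictMono hdiff hσ hbpos yp).injective h1
  simp_all

theorem bsig_surjective (hlift : IsTorusLift χ) : Function.Surjective (Bsig χ σ) := by
  intro q
  obtain ⟨θ, hθ⟩ := bsig_fiber_surjective hdiff hσ hbpos hlift q.2 q.1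
  exact ⟨(θ, q.2), Prod.ext hθ rfl⟩

theorem bsig_bijOn (hlift : IsTorusLift χ) : Set.BijOn (Bsig χ σ) solidCyl solidCyl := by
  refine ⟨fun p hp => hp, (bsig_injective hdiff hσ hbpos).injOn, fun q hq => ?_⟩
  obtain ⟨θ, hθ⟩ := bsig_fiber_surjective hdiff hσ hbpos hlift q.2 q.1
  exact ⟨(θ, q.2), hq, Prod.ext hθ rfl⟩

theorem bsig_hasFDerivAt (p : ℝ × ℝ × ℝ) :
    HasFDerivAt (Bsig χ σ)
      (((((1 - σ) • ((ContinuousLinearMap.fst ℝ ℝ (ℝ × ℝ)).comp (fderiv ℝ χ p))) +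
        σ • (ContinuousLinearMap.fst ℝ ℝ (ℝ × ℝ)))).prod
        (ContinuousLinearMap.snd ℝ ℝ (ℝ × ℝ))) p := by
  apply HasFDerivAt.prodMk
  · have h1 : HasFDerivAt (fun p : ℝ × ℝ × ℝ => (χ p).1)
        ((ContinuousLinearMap.fst ℝ ℝ (ℝ × ℝ)).comp (fderiv ℝ χ p)) p :=
      ((hdiff p).hasFDerivAt).fst
    have h2 : HasFDerivAt (fun p : ℝ × ℝ × ℝ => p.1)
        (ContinuousLinearMap.fst ℝ ℝ (ℝ × ℝ)) p := hasFDerivAt_fst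
    exact (h1.const_mul (1 - σ)).add (h2.const_mul σ)
  · exact hasFDerivAt_snd

omit hdiff in
theorem bsig_fderiv_apply (p v : ℝ × ℝ × ℝ) :
    (((((1 - σ) • ((ContinuousLinearMap.fst ℝ ℝ (ℝ × ℝ)).comp (fderiv ℝ χ p))) +
        σ • (ContinuousLinearMap.fst ℝ ℝ (ℝ × ℝ)))).prod
        (ContinuousLinearMap.snd ℝ ℝ (ℝ × ℝ))) v
      = ((1 - σ) * (fderiv ℝ χ p v).1 + σ * v.1, v.2) := by
  simp [ContinuousLinearMap.prod_apply, ContinuousLinearMap.add_apply,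
    ContinuousLinearMap.smul_apply, ContinuousLinearMap.comp_apply, smul_eq_mul]

theorem bsig_fderiv_bijective (p : ℝ × ℝ × ℝ) :
    Function.Bijective (fderiv ℝ (Bsig χ σ) p) := by
  rw [(bsig_hasFDerivAt hdiff hσ hbpos p).fderiv]
  set L := fderiv ℝ χ p with hL
  have hco := bsig_coeff_pos hdiff hσ hbpos p
  constructor
  · intro u v huv
    have hw : ((((1 - σ) • ((ContinuousLinearMap.fst ℝ ℝ (ℝ × ℝ)).comp L)) +
        σ • (ContinuousLinearMap.fst ℝ ℝ (ℝ × ℝ))).prod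
        (ContinuousLinearMap.snd ℝ ℝ (ℝ × ℝ))) (u - v) = 0 := by
      rw [map_sub, huv, sub_self]
    rw [bsig_fderiv_apply hσ hbpos] at hw
    have hw2 : (u - v).2 = 0 := congrArg Prod.snd hw
    have hw1 : (1 - σ) * (L (u - v)).1 + σ * (u - v).1 = 0 := congrArg Prod.fst hw
    have hdec : u - v = (u - v).1 • ((1:ℝ), (0:ℝ), (0:ℝ)) := by
      refine Prod.ext (by simp) ?_
      rw [hw2]; simp; rfl
    rw [hdec, map_smul] at hw1
    have : (u - v).1 * ((1 - σ) * (L (1, 0, 0)).1 + σ) = 0 := by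
      simp only [Prod.smul_fst, smul_eq_mul] at hw1
      linear_combination hw1
    have h0 : (u - v).1 = 0 := by
      rcases mul_eq_zero.mp this with h | h
      · exact h
      · exact absurd h (ne_of_gt hco)
    have : u - v = 0 := by rw [hdec, h0, zero_smul]
    exact sub_eq_zero.mp this
  · intro w
    set d := (L ((1:ℝ), (0:ℝ), (0:ℝ))).1 with hd
    refine ⟨((w.1 - (1 - σ) * (L ((0:ℝ), w.2)).1) / ((1 - σ) * d + σ), w.2), ?_⟩
    rw [bsig_fderiv_apply hσ hbpos]
    set c := (w.1 - (1 - σ) * (L ((0:ℝ), w.2)).1) / ((1 - σ) * d + σ) with hc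
    refine Prod.ext ?_ rfl
    have hdec : ((c, w.2) : ℝ × ℝ × ℝ) = c • ((1:ℝ), (0:ℝ), (0:ℝ)) + ((0:ℝ), w.2) := by
      refine Prod.ext (by simp) (by simp)
    rw [hdec, map_add, map_smul]
    have hsolve : c * ((1 - σ) * d + σ) = w.1 - (1 - σ) * (L ((0:ℝ), w.2)).1 :=
      div_mul_cancel₀ _ (ne_of_gt hco)
    simp only [Prod.fst_add, Prod.smul_fst, smul_eq_mul, Prod.fst]
    rw [← hL, ← hd]
    linear_combination hsolve

end BsigFiber

/-! ### Global properties of `Bmap` -/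

section BmapGlobal

variable (hdiff : Differentiable ℝ χ)
  (hbpos : ∀ p : ℝ × ℝ × ℝ, 0 < (fderiv ℝ χ p ((1 : ℝ), (0 : ℝ), (0 : ℝ))).1)
  (hlift : IsTorusLift χ)

theorem bmap_eq : Bsig χ 0 = Bmap χ := funext fun p => by simp [Bsig, Bmap]

theorem zero_mem_Icc01 : (0:ℝ) ∈ Icc (0:ℝ) 1 := ⟨le_refl 0, zero_le_one⟩

include hdiff hbpos hlift in
theorem bmap_bijective : Function.Bijective (Bmap χ) := by
  rw [← bmap_eq]
  exact ⟨bsig_injective hdiff zero_mem_Icc01 hbpos,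
    bsig_surjective hdiff zero_mem_Icc01 hbpos hlift⟩

include hdiff hbpos hlift

theorem bmapInv_left : ∀ p, BmapInv χ (Bmap χ p) = p :=
  fun p => leftInverse_invFun (bmap_bijective hdiff hbpos hlift).1 p

theorem bmapInv_right : ∀ q, Bmap χ (BmapInv χ q) = q :=
  fun q => rightInverse_invFun (bmap_bijective hdiff hbpos hlift).2 q

theorem bmapInv_snd : ∀ q, (BmapInv χ q).2 = q.2 := by
  intro q
  have := congrArg Prod.snd (bmapInv_right hdiff hbpos hlift q)
  simpa [Bmap] using this

omit hbpos hlift in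
theorem bmap_fderiv_bijective (hσ0 : (0:ℝ) ∈ Icc (0:ℝ) 1)
    (hbp : ∀ p : ℝ × ℝ × ℝ, 0 < (fderiv ℝ χ p ((1 : ℝ), (0 : ℝ), (0 : ℝ))).1) :
    ∀ p, Function.Bijective (fderiv ℝ (Bmap χ) p) := by
  intro p
  rw [← bmap_eq]
  exact bsig_fderiv_bijective hdiff hσ0 hbp p

theorem bmapInv_contDiff (hsmooth : ContDiff ℝ (⊤ : ℕ∞) χ) : ContDiff ℝ (⊤ : ℕ∞) (BmapInv χ) := by
  apply contDiff_invFun_aux ((contDiff_fst.comp hsmooth).prodMk contDiff_snd)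
    (bmapInv_right hdiff hbpos hlift) (bmapInv_left hdiff hbpos hlift)
  exact bmap_fderiv_bijective hdiff zero_mem_Icc01 hbpos

theorem gmap_contDiff (hsmooth : ContDiff ℝ (⊤ : ℕ∞) χ) : ContDiff ℝ (⊤ : ℕ∞) (gmap χ) :=
  contDiff_fst.comp (contDiff_snd.comp
    (hsmooth.comp (bmapInv_contDiff hdiff hbpos hlift hsmooth)))

theorem gmap_bmap : ∀ p, gmap χ (Bmap χ p) = (χ p).2.1 := by
  intro p; simp [gmap, bmapInv_left hdiff hbpos hlift]

omit hdiff hbpos hlift in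
theorem bmap_id {ε : ℝ} (hid : ∀ p : ℝ × ℝ × ℝ, 1 - ε ≤ p.2.1 ^ 2 + p.2.2 ^ 2 → χ p = p)
    {q : ℝ × ℝ × ℝ} (hq : 1 - ε ≤ q.2.1 ^ 2 + q.2.2 ^ 2) : Bmap χ q = q := by
  simp [Bmap, hid q hq]

theorem bmapInv_id {ε : ℝ} (hid : ∀ p : ℝ × ℝ × ℝ, 1 - ε ≤ p.2.1 ^ 2 + p.2.2 ^ 2 → χ p = p)
    {q : ℝ × ℝ × ℝ} (hq : 1 - ε ≤ q.2.1 ^ 2 + q.2.2 ^ 2) : BmapInv χ q = q := by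
  conv_lhs => rw [← bmap_id hid hq]
  exact bmapInv_left hdiff hbpos hlift q

theorem gmap_id {ε : ℝ} (hid : ∀ p : ℝ × ℝ × ℝ, 1 - ε ≤ p.2.1 ^ 2 + p.2.2 ^ 2 → χ p = p)
    {q : ℝ × ℝ × ℝ} (hq : 1 - ε ≤ q.2.1 ^ 2 + q.2.2 ^ 2) : gmap χ q = q.2.1 := by
  unfold gmap
  rw [bmapInv_id hdiff hbpos hlift hid hq, hid q hq]

theorem chi_comp_bmapInv (hlevel : ∀ p : ℝ × ℝ × ℝ, (χ p).2.2 = p.2.2) :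
    χ ∘ BmapInv χ = fun q => (q.1, gmap χ q, q.2.2) := by
  funext q
  simp only [Function.comp_apply]
  refine Prod.ext ?_ (Prod.ext rfl ?_)
  · have := congrArg Prod.fst (bmapInv_right hdiff hbpos hlift q)
    simpa [Bmap] using this
  · rw [show (χ (BmapInv χ q)).2.2 = (BmapInv χ q).2.2 from hlevel _,
      bmapInv_snd hdiff hbpos hlift q]

theorem bmapInv_fderiv_bijective (hsmooth : ContDiff ℝ (⊤ : ℕ∞) χ) :
    ∀ q, Function.Bijective (fderiv ℝ (BmapInv χ) q) := by
  intro q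
  have hdB : Differentiable ℝ (Bmap χ) :=
    ((contDiff_fst.comp hsmooth).prodMk contDiff_snd).differentiable (by simp)
  have hdI : Differentiable ℝ (BmapInv χ) :=
    (bmapInv_contDiff hdiff hbpos hlift hsmooth).differentiable (by simp)
  -- left: (fderiv Binv q).comp (fderiv Bmap (Binv q)) = id
  have hL : (fderiv ℝ (BmapInv χ) q).comp (fderiv ℝ (Bmap χ) (BmapInv χ q))
      = ContinuousLinearMap.id ℝ (ℝ × ℝ × ℝ) := by
    have hcomp : fderiv ℝ (BmapInv χ ∘ Bmap χ) (BmapInv χ q)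
        = (fderiv ℝ (BmapInv χ) (Bmap χ (BmapInv χ q))).comp
          (fderiv ℝ (Bmap χ) (BmapInv χ q)) :=
      fderiv_comp _ (hdI _) (hdB _)
    rw [show BmapInv χ ∘ Bmap χ = id from funext (bmapInv_left hdiff hbpos hlift),
      fderiv_id, bmapInv_right hdiff hbpos hlift q] at hcomp
    exact hcomp.symm
  -- right: (fderiv Bmap (Binv q)).comp (fderiv Binv q) = id
  have hR : (fderiv ℝ (Bmap χ) (BmapInv χ q)).comp (fderiv ℝ (BmapInv χ) q)
      = ContinuousLinearMap.id ℝ (ℝ × ℝ × ℝ) := by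
    have hcomp : fderiv ℝ (Bmap χ ∘ BmapInv χ) q
        = (fderiv ℝ (Bmap χ) (BmapInv χ q)).comp (fderiv ℝ (BmapInv χ) q) :=
      fderiv_comp _ (hdB _) (hdI _)
    rw [show Bmap χ ∘ BmapInv χ = id from funext (bmapInv_right hdiff hbpos hlift),
      fderiv_id] at hcomp
    exact hcomp.symm
  constructor
  · intro u v huv
    have h1 := ContinuousLinearMap.ext_iff.mp hR u
    have h2 := ContinuousLinearMap.ext_iff.mp hR v
    simp only [ContinuousLinearMap.comp_apply, ContinuousLinearMap.id_apply] at h1 h2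
    rw [← h1, ← h2, huv]
  · intro w
    refine ⟨fderiv ℝ (Bmap χ) (BmapInv χ q) w, ?_⟩
    have h1 := ContinuousLinearMap.ext_iff.mp hL w
    simpa only [ContinuousLinearMap.comp_apply, ContinuousLinearMap.id_apply] using h1

/-! ### Positivity of the `s`-derivative of `g` -/

theorem gmap_fderiv_eq_one {ε : ℝ} (hε0 : 0 < ε)
    (hsmooth : ContDiff ℝ (⊤ : ℕ∞) χ)
    (hid : ∀ p : ℝ × ℝ × ℝ, 1 - ε ≤ p.2.1 ^ 2 + p.2.2 ^ 2 → χ p = p)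
    {q : ℝ × ℝ × ℝ} (hq : 1 - ε < q.2.1 ^ 2 + q.2.2 ^ 2) :
    fderiv ℝ (gmap χ) q ((0:ℝ), (1:ℝ), (0:ℝ)) = 1 := by
  have hU : IsOpen {r : ℝ × ℝ × ℝ | 1 - ε < r.2.1 ^ 2 + r.2.2 ^ 2} := by
    have hcont : Continuous fun r : ℝ × ℝ × ℝ => r.2.1 ^ 2 + r.2.2 ^ 2 := by
      exact ((continuous_fst.comp continuous_snd).pow 2).add
        ((continuous_snd.comp continuous_snd).pow 2)
    exact isOpen_lt continuous_const hcont
  have hev : gmap χ =ᶠ[nhds q] (fun r => r.2.1) := by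
    filter_upwards [hU.mem_nhds hq] with r hr
    exact gmap_id hdiff hbpos hlift hid hr.le
  rw [hev.fderiv_eq]
  have hs : HasFDerivAt (fun r : ℝ × ℝ × ℝ => r.2.1)
      ((ContinuousLinearMap.fst ℝ ℝ ℝ).comp (ContinuousLinearMap.snd ℝ ℝ (ℝ × ℝ))) q :=
    hasFDerivAt_snd.fst
  rw [hs.fderiv]
  simp

theorem gmap_fderiv_ne_zero (hsmooth : ContDiff ℝ (⊤ : ℕ∞) χ)
    (hderiv : ∀ p ∈ solidCyl, Function.Bijective (fderiv ℝ χ p))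
    (hlevel : ∀ p : ℝ × ℝ × ℝ, (χ p).2.2 = p.2.2)
    {q : ℝ × ℝ × ℝ} (hq : q.2.1 ^ 2 + q.2.2 ^ 2 ≤ 1) :
    fderiv ℝ (gmap χ) q ((0:ℝ), (1:ℝ), (0:ℝ)) ≠ 0 := by
  -- the derivative of `A₀ = χ ∘ BmapInv` at `q` is bijective
  have hgd : Differentiable ℝ (gmap χ) :=
    (gmap_contDiff hdiff hbpos hlift hsmooth).differentiable (by simp)
  have hbij : Function.Bijective (fderiv ℝ (χ ∘ BmapInv χ) q) := by
    rw [fderiv_comp _ (hdiff _)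
      ((bmapInv_contDiff hdiff hbpos hlift hsmooth).differentiable (by simp) _)]
    have hmem : BmapInv χ q ∈ solidCyl := by
      rw [mem_solidCyl]
      have h2 := bmapInv_snd hdiff hbpos hlift q
      rw [show (BmapInv χ q).2.1 = q.2.1 from congrArg Prod.fst h2,
        show (BmapInv χ q).2.2 = q.2.2 from congrArg Prod.snd h2]
      exact hq
    exact (hderiv _ hmem).comp (bmapInv_fderiv_bijective hdiff hbpos hlift hsmooth q)
  -- compute the derivative of `A₀` explicitly
  have hA0 : HasFDerivAt (fun r : ℝ × ℝ × ℝ => (r.1, gmap χ r, r.2.2))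
      ((ContinuousLinearMap.fst ℝ ℝ (ℝ × ℝ)).prod ((fderiv ℝ (gmap χ) q).prod
        ((ContinuousLinearMap.snd ℝ ℝ ℝ).comp (ContinuousLinearMap.snd ℝ ℝ (ℝ × ℝ))))) q :=
    hasFDerivAt_fst.prodMk (((hgd q).hasFDerivAt).prodMk hasFDerivAt_snd.snd)
  rw [chi_comp_bmapInv hdiff hbpos hlift hlevel, hA0.fderiv] at hbij
  intro h0
  have h1 : ((ContinuousLinearMap.fst ℝ ℝ (ℝ × ℝ)).prod ((fderiv ℝ (gmap χ) q).prod
        ((ContinuousLinearMap.snd ℝ ℝ ℝ).comp (ContinuousLinearMap.snd ℝ ℝ (ℝ × ℝ)))))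
      ((0:ℝ), (1:ℝ), (0:ℝ)) = 0 := by
    simp [ContinuousLinearMap.prod_apply, h0]
  have h2 := hbij.1 (h1.trans (map_zero _).symm)
  have := congrArg (fun v : ℝ × ℝ × ℝ => v.2.1) h2
  simp at this

theorem gmap_fderiv_pos {ε : ℝ} (hε : ε ∈ Set.Ioo (0:ℝ) 1)
    (hsmooth : ContDiff ℝ (⊤ : ℕ∞) χ)
    (hderiv : ∀ p ∈ solidCyl, Function.Bijective (fderiv ℝ χ p))
    (hid : ∀ p : ℝ × ℝ × ℝ, 1 - ε ≤ p.2.1 ^ 2 + p.2.2 ^ 2 → χ p = p)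
    (hlevel : ∀ p : ℝ × ℝ × ℝ, (χ p).2.2 = p.2.2) :
    ∀ q : ℝ × ℝ × ℝ, 0 < fderiv ℝ (gmap χ) q ((0:ℝ), (1:ℝ), (0:ℝ)) := by
  have hcont : Continuous fun q : ℝ × ℝ × ℝ => fderiv ℝ (gmap χ) q ((0:ℝ), (1:ℝ), (0:ℝ)) :=
    ((gmap_contDiff hdiff hbpos hlift hsmooth).continuous_fderiv (by simp)).clm_apply
      continuous_const
  have hne : ∀ q : ℝ × ℝ × ℝ, fderiv ℝ (gmap χ) q ((0:ℝ), (1:ℝ), (0:ℝ)) ≠ 0 := by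
    intro q
    by_cases hq : q.2.1 ^ 2 + q.2.2 ^ 2 ≤ 1
    · exact gmap_fderiv_ne_zero hdiff hbpos hlift hsmooth hderiv hlevel hq
    · rw [gmap_fderiv_eq_one hdiff hbpos hlift hε.1 hsmooth hid (by linarith [not_le.mp hq, hε.1])]
      norm_num
  intro q
  rcases lt_or_gt_of_ne (hne q) with hlt | hgt
  · exfalso
    have hq0 : fderiv ℝ (gmap χ) ((0:ℝ), (2:ℝ), (0:ℝ)) ((0:ℝ), (1:ℝ), (0:ℝ)) = 1 := by
      apply gmap_fderiv_eq_one hdiff hbpos hlift hε.1 hsmooth hid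
      norm_num; linarith [hε.1]
    obtain ⟨q', hq'⟩ := intermediate_value_univ q ((0:ℝ), (2:ℝ), (0:ℝ)) hcont
      (show (0:ℝ) ∈ Icc _ _ by rw [hq0]; exact ⟨hlt.le, zero_le_one⟩)
    exact hne q' hq'
  · exact hgt

/-! ### Fiberwise analysis of `Amap` -/

variable (hsmooth : ContDiff ℝ (⊤ : ℕ∞) χ) {σ : ℝ} (hσ : σ ∈ Icc (0:ℝ) 1)
  (hgpos : ∀ q : ℝ × ℝ × ℝ, 0 < fderiv ℝ (gmap χ) q ((0:ℝ), (1:ℝ), (0:ℝ)))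

include hsmooth

theorem amap_fiber_hasDerivAt (θ t s : ℝ) :
    HasDerivAt (fun s' => (1 - σ) * gmap χ (θ, s', t) + σ * s')
      ((1 - σ) * fderiv ℝ (gmap χ) (θ, s, t) ((0:ℝ), (1:ℝ), (0:ℝ)) + σ) s := by
  have h1 := hasDerivAt_line2'
    ((gmap_contDiff hdiff hbpos hlift hsmooth).differentiable (by simp)) θ t s
  simpa [Pi.add_def] using (h1.const_mul (1 - σ)).add ((hasDerivAt_id s).const_mul σ)

include hσ hgpos

theorem amap_coeff_pos : ∀ q : ℝ × ℝ × ℝ,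
    0 < (1 - σ) * fderiv ℝ (gmap χ) q ((0:ℝ), (1:ℝ), (0:ℝ)) + σ := by
  intro q
  rcases eq_or_lt_of_le hσ.1 with h | h
  · have := hgpos q; rw [← h]; simpa using this
  · have h1 : (0:ℝ) ≤ (1 - σ) * fderiv ℝ (gmap χ) q ((0:ℝ), (1:ℝ), (0:ℝ)) :=
      mul_nonneg (by linarith [hσ.2]) (hgpos q).le
    linarith

theorem amap_fiber_strictMono (θ t : ℝ) :
    StrictMono (fun s => (1 - σ) * gmap χ (θ, s, t) + σ * s) := by
  apply strictMono_of_deriv_pos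
  intro s
  rw [(amap_fiber_hasDerivAt hdiff hbpos hlift hsmooth θ t s).deriv]
  exact amap_coeff_pos hdiff hbpos hlift hsmooth hσ hgpos (θ, s, t)

theorem amap_fiber_continuous (θ t : ℝ) :
    Continuous (fun s => (1 - σ) * gmap χ (θ, s, t) + σ * s) := by
  have : Continuous fun s : ℝ => gmap χ (θ, s, t) :=
    (gmap_contDiff hdiff hbpos hlift hsmooth).continuous.comp
      (continuous_const.prodMk (continuous_id.prodMk continuous_const))
  exact (continuous_const.mul this).add (continuous_const.mul continuous_id)

omit hσ hgpos hsmooth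

theorem amap_fiber_boundary {ε : ℝ}
    (hid : ∀ p : ℝ × ℝ × ℝ, 1 - ε ≤ p.2.1 ^ 2 + p.2.2 ^ 2 → χ p = p)
    {θ s t : ℝ} (h : 1 - ε ≤ s ^ 2 + t ^ 2) :
    (1 - σ) * gmap χ (θ, s, t) + σ * s = s := by
  rw [gmap_id hdiff hbpos hlift hid (q := (θ, s, t)) h]; ring

include hsmooth hσ hgpos in
theorem amap_bijOn {ε : ℝ} (hε : ε ∈ Set.Ioo (0:ℝ) 1)
    (hid : ∀ p : ℝ × ℝ × ℝ, 1 - ε ≤ p.2.1 ^ 2 + p.2.2 ^ 2 → χ p = p) :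
    Set.BijOn (Amap χ σ) solidCyl solidCyl := by
  refine ⟨?_, ?_, ?_⟩
  · rintro ⟨θ, s, t⟩ hq
    rw [mem_solidCyl] at hq ⊢
    simp only at hq
    set r := Real.sqrt (1 - t^2) with hrdef
    have hr0 : 0 ≤ r := Real.sqrt_nonneg _
    have hr2 : r ^ 2 = 1 - t ^ 2 := Real.sq_sqrt (by nlinarith)
    have habs : |s| ≤ r := by
      rw [hrdef]
      exact Real.abs_le_sqrt (by nlinarith)
    obtain ⟨hs1, hs2⟩ := abs_le.mp habs
    have hfr : (1 - σ) * gmap χ (θ, r, t) + σ * r = r :=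
      amap_fiber_boundary hdiff hbpos hlift hid (by rw [hr2]; linarith [hε.1])
    have hfnr : (1 - σ) * gmap χ (θ, -r, t) + σ * (-r) = -r :=
      amap_fiber_boundary hdiff hbpos hlift hid (by nlinarith [hr2, hε.1])
    have hmono := (amap_fiber_strictMono hdiff hbpos hlift hsmooth hσ hgpos θ t).monotone
    have h1 : (1 - σ) * gmap χ (θ, s, t) + σ * s ≤ r := by
      have h' : (1 - σ) * gmap χ (θ, s, t) + σ * s
          ≤ (1 - σ) * gmap χ (θ, r, t) + σ * r := hmono hs2
      linarith [hfr]
    have h2 : -r ≤ (1 - σ) * gmap χ (θ, s, t) + σ * s := by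
      have h' : (1 - σ) * gmap χ (θ, -r, t) + σ * (-r)
          ≤ (1 - σ) * gmap χ (θ, s, t) + σ * s := hmono hs1
      linarith [hfnr]
    show ((1 - σ) * gmap χ (θ, s, t) + σ * s) ^ 2 + t ^ 2 ≤ 1
    have := sq_le_sq' h2 h1
    nlinarith [this]
  · rintro ⟨θ, s, t⟩ hp ⟨θ', s', t'⟩ hp' h
    simp only [Amap, Prod.mk.injEq] at h
    obtain ⟨h1, h2, h3⟩ := h
    subst h1; subst h3
    have := (amap_fiber_strictMono hdiff hbpos hlift hsmooth hσ hgpos θ t).injective h2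
    simp_all
  · rintro ⟨θ, sv, t⟩ hq
    rw [mem_solidCyl] at hq
    simp only at hq
    set r := Real.sqrt (1 - t^2) with hrdef
    have hr0 : 0 ≤ r := Real.sqrt_nonneg _
    have hr2 : r ^ 2 = 1 - t ^ 2 := Real.sq_sqrt (by nlinarith)
    have habs : |sv| ≤ r := by
      rw [hrdef]; exact Real.abs_le_sqrt (by nlinarith)
    obtain ⟨hs1, hs2⟩ := abs_le.mp habs
    have hfr : (1 - σ) * gmap χ (θ, r, t) + σ * r = r :=
      amap_fiber_boundary hdiff hbpos hlift hid (by rw [hr2]; linarith [hε.1])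
    have hfnr : (1 - σ) * gmap χ (θ, -r, t) + σ * (-r) = -r :=
      amap_fiber_boundary hdiff hbpos hlift hid (by nlinarith [hr2, hε.1])
    have hrr : -r ≤ r := by linarith
    obtain ⟨s, hsmem, hfs⟩ := intermediate_value_Icc hrr
      (amap_fiber_continuous hdiff hbpos hlift hsmooth hσ hgpos θ t).continuousOn
      (show sv ∈ Icc ((1 - σ) * gmap χ (θ, -r, t) + σ * (-r))
          ((1 - σ) * gmap χ (θ, r, t) + σ * r) by rw [hfnr, hfr]; exact ⟨hs1, hs2⟩)
    refine ⟨(θ, s, t), ?_, ?_⟩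
    · rw [mem_solidCyl]
      obtain ⟨hsa, hsb⟩ := hsmem
      have := sq_le_sq' hsa hsb
      show s ^ 2 + t ^ 2 ≤ 1
      nlinarith [this]
    · have hfs' : (1 - σ) * gmap χ (θ, s, t) + σ * s = sv := hfs
      simp only [Amap]
      exact Prod.ext rfl (Prod.ext hfs' rfl)

include hsmooth in
theorem amap_hasFDerivAt (q : ℝ × ℝ × ℝ) :
    HasFDerivAt (Amap χ σ)
      ((ContinuousLinearMap.fst ℝ ℝ (ℝ × ℝ)).prod
        ((((1 - σ) • fderiv ℝ (gmap χ) q) +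
          σ • ((ContinuousLinearMap.fst ℝ ℝ ℝ).comp (ContinuousLinearMap.snd ℝ ℝ (ℝ × ℝ)))).prod
          ((ContinuousLinearMap.snd ℝ ℝ ℝ).comp (ContinuousLinearMap.snd ℝ ℝ (ℝ × ℝ))))) q := by
  apply hasFDerivAt_fst.prodMk
  apply HasFDerivAt.prodMk
  · have hg : HasFDerivAt (gmap χ) (fderiv ℝ (gmap χ) q) q :=
      ((gmap_contDiff hdiff hbpos hlift hsmooth).differentiable (by simp) q).hasFDerivAt
    have h2 : HasFDerivAt (fun r : ℝ × ℝ × ℝ => r.2.1)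
        ((ContinuousLinearMap.fst ℝ ℝ ℝ).comp (ContinuousLinearMap.snd ℝ ℝ (ℝ × ℝ))) q :=
      hasFDerivAt_snd.fst
    exact (hg.const_mul (1 - σ)).add (h2.const_mul σ)
  · exact hasFDerivAt_snd.snd

omit hdiff hbpos hlift in
theorem amap_fderiv_apply (q v : ℝ × ℝ × ℝ) :
    ((ContinuousLinearMap.fst ℝ ℝ (ℝ × ℝ)).prod
        ((((1 - σ) • fderiv ℝ (gmap χ) q) +
          σ • ((ContinuousLinearMap.fst ℝ ℝ ℝ).comp (ContinuousLinearMap.snd ℝ ℝ (ℝ × ℝ)))).prod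
          ((ContinuousLinearMap.snd ℝ ℝ ℝ).comp (ContinuousLinearMap.snd ℝ ℝ (ℝ × ℝ))))) v
      = (v.1, (1 - σ) * fderiv ℝ (gmap χ) q v + σ * v.2.1, v.2.2) := by
  simp [ContinuousLinearMap.prod_apply, ContinuousLinearMap.add_apply,
    ContinuousLinearMap.smul_apply, ContinuousLinearMap.comp_apply, smul_eq_mul]

include hsmooth hσ hgpos in
theorem amap_fderiv_bijective (q : ℝ × ℝ × ℝ) :
    Function.Bijective (fderiv ℝ (Amap χ σ) q) := by
  rw [(amap_hasFDerivAt hdiff hbpos hlift hsmooth (σ := σ) q).fderiv]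
  set G := fderiv ℝ (gmap χ) q with hG
  have hco := amap_coeff_pos hdiff hbpos hlift hsmooth hσ hgpos q
  constructor
  · intro u v huv
    have hw : ((ContinuousLinearMap.fst ℝ ℝ (ℝ × ℝ)).prod
        ((((1 - σ) • G) +
          σ • ((ContinuousLinearMap.fst ℝ ℝ ℝ).comp (ContinuousLinearMap.snd ℝ ℝ (ℝ × ℝ)))).prod
          ((ContinuousLinearMap.snd ℝ ℝ ℝ).comp (ContinuousLinearMap.snd ℝ ℝ (ℝ × ℝ)))))
        (u - v) = 0 := by rw [map_sub, huv, sub_self]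
    rw [amap_fderiv_apply] at hw
    have hw1 : (u - v).1 = 0 := congrArg Prod.fst hw
    have hw3 : (u - v).2.2 = 0 := congrArg (fun x : ℝ × ℝ × ℝ => x.2.2) hw
    have hw2 : (1 - σ) * G (u - v) + σ * (u - v).2.1 =  0 :=
      congrArg (fun x : ℝ × ℝ × ℝ => x.2.1) hw
    have hdec : u - v = (u - v).2.1 • ((0:ℝ), (1:ℝ), (0:ℝ)) := by
      refine Prod.ext (by simpa using hw1) (Prod.ext (by simp) (by simpa using hw3))
    rw [hdec] at hw2
    simp only [map_smul, smul_eq_mul, Prod.smul_snd, Prod.smul_fst, mul_one] at hw2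
    have hkey : (u - v).2.1 * ((1 - σ) * G ((0:ℝ), (1:ℝ), (0:ℝ)) + σ) = 0 := by
      linear_combination hw2
    have h0 : (u - v).2.1 = 0 := by
      rcases mul_eq_zero.mp hkey with h | h
      · exact h
      · exact absurd h (ne_of_gt hco)
    have : u - v = 0 := by rw [hdec, h0, zero_smul]
    exact sub_eq_zero.mp this
  · intro w
    set d := G ((0:ℝ), (1:ℝ), (0:ℝ)) with hd
    set c := (w.2.1 - (1 - σ) * G (w.1, (0:ℝ), w.2.2)) / ((1 - σ) * d + σ) with hc
    refine ⟨(w.1, c, w.2.2), ?_⟩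
    rw [amap_fderiv_apply]
    refine Prod.ext rfl (Prod.ext ?_ rfl)
    have hdec : ((w.1, c, w.2.2) : ℝ × ℝ × ℝ)
        = c • ((0:ℝ), (1:ℝ), (0:ℝ)) + (w.1, (0:ℝ), w.2.2) := by
      refine Prod.ext (by simp) (Prod.ext (by simp) (by simp))
    rw [hdec, map_add, map_smul, smul_eq_mul]
    have hsolve : c * ((1 - σ) * d + σ) = w.2.1 - (1 - σ) * G (w.1, (0:ℝ), w.2.2) :=
      div_mul_cancel₀ _ (ne_of_gt hco)
    show (1 - σ) * (c * G ((0:ℝ), (1:ℝ), (0:ℝ)) + G (w.1, (0:ℝ), w.2.2))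
        + σ * (c • ((0:ℝ), (1:ℝ), (0:ℝ)) + ((w.1 : ℝ), (0:ℝ), (w.2.2 : ℝ))).2.1 = w.2.1
    have h21 : (c • ((0:ℝ), (1:ℝ), (0:ℝ)) + ((w.1 : ℝ), (0:ℝ), (w.2.2 : ℝ))).2.1 = c := by
      simp
    rw [h21, ← hd]
    linear_combination hsolve

/-! ### Equivariance -/

include hlift in
theorem bmapInv_equivariant (u : ℝ) (y : ℝ × ℝ) :
    BmapInv χ (u + 2 * π, y) = ((BmapInv χ (u, y)).1 + 2 * π, y) := by
  apply (bmap_bijective hdiff hbpos hlift).1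
  rw [bmapInv_right hdiff hbpos hlift]
  set x := BmapInv χ (u, y) with hxdef
  have hx2 : x.2 = y := bmapInv_snd hdiff hbpos hlift (u, y)
  have hx1 : (χ x).1 = u := by
    have := congrArg Prod.fst (bmapInv_right hdiff hbpos hlift (u, y))
    simpa [Bmap] using this
  have hl := (hlift x).1
  symm
  show Bmap χ (x.1 + 2 * π, y) = (u + 2 * π, y)
  simp only [Bmap]
  rw [← hx2, hl, hx1]

include hlift in
theorem gmap_equivariant (u : ℝ) (y : ℝ × ℝ) :
    gmap χ (u + 2 * π, y) = gmap χ (u, y) := by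
  unfold gmap
  rw [bmapInv_equivariant hdiff hbpos hlift u y]
  set x := BmapInv χ (u, y) with hxdef
  have hx2 : x.2 = y := bmapInv_snd hdiff hbpos hlift (u, y)
  have hl := (hlift x).2
  rw [← hx2, hl]

end BmapGlobal


/-- Isotopy lemma for fillings (coordinate version): a `C^∞` lift `χ` of a
diffeomorphism of the solid torus `S¹ × D` which is the identity for
`s² + t² ≥ 1 − ε`, preserves the `t`-coordinate, fixes `{θ = 0}`, and satisfies
`∂χ¹/∂θ > 0`, is smoothly isotopic to the identity relative to the boundary region. -/
theorem filling_isotopy_lemma (ε : ℝ) (hε : ε ∈ Set.Ioo (0 : ℝ) 1)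
    (χ : ℝ × ℝ × ℝ → ℝ × ℝ × ℝ)
    (hsmooth : ContDiff ℝ (⊤ : ℕ∞) χ)
    (hlift : IsTorusLift χ)
    (hbij : Set.BijOn χ solidCyl solidCyl)
    (hderiv : ∀ p ∈ solidCyl, Function.Bijective (fderiv ℝ χ p))
    (hid : ∀ p : ℝ × ℝ × ℝ, 1 - ε ≤ p.2.1 ^ 2 + p.2.2 ^ 2 → χ p = p)
    (hlevel : ∀ p : ℝ × ℝ × ℝ, (χ p).2.2 = p.2.2)
    (hfix : ∀ st ∈ paramDisc, χ ((0 : ℝ), st) = ((0 : ℝ), st))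
    (hmono : ∀ p ∈ solidCyl, 0 < (fderiv ℝ χ p ((1 : ℝ), (0 : ℝ), (0 : ℝ))).1) :
    ∃ X : ℝ × (ℝ × ℝ × ℝ) → ℝ × ℝ × ℝ,
      ContDiff ℝ (⊤ : ℕ∞) X ∧
      (∀ p : ℝ × ℝ × ℝ, X (0, p) = χ p) ∧
      (∀ p ∈ solidCyl, X (1, p) = p) ∧
      ∀ σ ∈ Set.Icc (0 : ℝ) 1,
        IsTorusLift (fun p => X (σ, p)) ∧
        Set.BijOn (fun p => X (σ, p)) solidCyl solidCyl ∧
        (∀ p ∈ solidCyl, Function.Bijective (fderiv ℝ (fun q => X (σ, q)) p)) ∧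
        (∀ p : ℝ × ℝ × ℝ, 1 - ε ≤ p.2.1 ^ 2 + p.2.2 ^ 2 → X (σ, p) = p) := by

  have hdiff : Differentiable ℝ χ := hsmooth.differentiable (by simp)
  have hbp : ∀ p : ℝ × ℝ × ℝ, 0 < (fderiv ℝ χ p ((1 : ℝ), (0 : ℝ), (0 : ℝ))).1 :=
    bpos hε.1 hdiff hid hmono
  have hgp : ∀ q : ℝ × ℝ × ℝ, 0 < fderiv ℝ (gmap χ) q ((0:ℝ), (1:ℝ), (0:ℝ)) :=
    gmap_fderiv_pos hdiff hbp hlift hε hsmooth hderiv hid hlevel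
  have hgc : ContDiff ℝ (⊤ : ℕ∞) (gmap χ) := gmap_contDiff hdiff hbp hlift hsmooth
  refine ⟨Xmap χ, ?_, ?_, ?_, ?_⟩
  · -- smoothness
    have hXdef : Xmap χ = fun z : ℝ × (ℝ × ℝ × ℝ) =>
        ((1 - z.1) * (χ z.2).1 + z.1 * z.2.1,
         (1 - z.1) * gmap χ ((1 - z.1) * (χ z.2).1 + z.1 * z.2.1, z.2.2) + z.1 * z.2.2.1,
         z.2.2.2) := rfl
    rw [hXdef]
    have c_u : ContDiff ℝ (⊤ : ℕ∞) (fun z : ℝ × (ℝ × ℝ × ℝ) => (1 - z.1) * (χ z.2).1 + z.1 * z.2.1) :=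
      ((contDiff_const.sub contDiff_fst).mul
        (contDiff_fst.comp (hsmooth.comp contDiff_snd))).add
        (contDiff_fst.mul (contDiff_fst.comp contDiff_snd))
    have c_t2 : ContDiff ℝ (⊤ : ℕ∞) (fun z : ℝ × (ℝ × ℝ × ℝ) => z.2.2) :=
      contDiff_snd.comp contDiff_snd
    have c_second : ContDiff ℝ (⊤ : ℕ∞) (fun z : ℝ × (ℝ × ℝ × ℝ) =>
        (1 - z.1) * gmap χ ((1 - z.1) * (χ z.2).1 + z.1 * z.2.1, z.2.2) + z.1 * z.2.2.1) :=
      ((contDiff_const.sub contDiff_fst).mul (hgc.comp (c_u.prodMk c_t2))).add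
        (contDiff_fst.mul (contDiff_fst.comp c_t2))
    exact c_u.prodMk (c_second.prodMk (contDiff_snd.comp c_t2))
  · -- time 0
    intro p
    show Amap χ 0 (Bsig χ 0 p) = χ p
    rw [bmap_eq]
    simp only [Amap]
    rw [gmap_bmap hdiff hbp hlift p]
    refine Prod.ext rfl (Prod.ext (by ring) ?_)
    show p.2.2 = (χ p).2.2
    exact (hlevel p).symm
  · -- time 1
    intro p _
    show Amap χ 1 (Bsig χ 1 p) = p
    simp only [Amap, Bsig]
    exact Prod.ext (by ring) (Prod.ext (by ring) rfl)
  · intro σ hσ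
    refine ⟨?_, ?_, ?_, ?_⟩
    · -- torus lift
      intro p
      have hu : (1 - σ) * (χ (p.1 + 2 * π, p.2)).1 + σ * (p.1 + 2 * π)
          = ((1 - σ) * (χ p).1 + σ * p.1) + 2 * π := by
        rw [(hlift p).1]; ring
      constructor
      · show (1 - σ) * (χ (p.1 + 2 * π, p.2)).1 + σ * (p.1 + 2 * π)
            = ((1 - σ) * (χ p).1 + σ * p.1) + 2 * π
        exact hu
      · show ((1 - σ) * gmap χ ((1 - σ) * (χ (p.1 + 2 * π, p.2)).1 + σ * (p.1 + 2 * π), p.2)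
            + σ * p.2.1, p.2.2)
          = ((1 - σ) * gmap χ ((1 - σ) * (χ p).1 + σ * p.1, p.2) + σ * p.2.1, p.2.2)
        refine Prod.ext ?_ rfl
        rw [hu, gmap_equivariant hdiff hbp hlift _ p.2]
    · -- bijection
      show Set.BijOn ((Amap χ σ) ∘ (Bsig χ σ)) solidCyl solidCyl
      exact (amap_bijOn hdiff hbp hlift hsmooth hσ hgp hε hid).comp
        (bsig_bijOn hdiff hσ hbp hlift)
    · -- invertible derivative
      intro p hp
      show Function.Bijective (fderiv ℝ ((Amap χ σ) ∘ (Bsig χ σ)) p)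
      have hdA : DifferentiableAt ℝ (Amap χ σ) (Bsig χ σ p) :=
        (amap_hasFDerivAt hdiff hbp hlift hsmooth (σ := σ) (Bsig χ σ p)).differentiableAt
      have hdB : DifferentiableAt ℝ (Bsig χ σ) p :=
        (bsig_hasFDerivAt hdiff hσ hbp p).differentiableAt
      rw [fderiv_comp p hdA hdB]
      exact (amap_fderiv_bijective hdiff hbp hlift hsmooth hσ hgp _).comp
        (bsig_fderiv_bijective hdiff hσ hbp p)
    · -- identity near the boundary
      intro p hp
      have hχp : χ p = p := hid p hp
      have hu : ((1 - σ) * (χ p).1 + σ * p.1, p.2) = p := by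
        rw [hχp]
        exact Prod.ext (by ring) rfl
      show ((1 - σ) * (χ p).1 + σ * p.1,
          (1 - σ) * gmap χ ((1 - σ) * (χ p).1 + σ * p.1, p.2) + σ * p.2.1, p.2.2) = p
      have hu1 : (1 - σ) * (χ p).1 + σ * p.1 = p.1 := by rw [hχp]; ring
      refine Prod.ext hu1 (Prod.ext ?_ rfl)
      show (1 - σ) * gmap χ ((1 - σ) * (χ p).1 + σ * p.1, p.2) + σ * p.2.1 = p.2.1
      rw [hu, gmap_id hdiff hbp hlift hid hp]
      ring
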